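/- arXiv:1003.2556 — 2 statements merged into one kernel-verified Lean document; each statement's English description precedes it below -/
import Mathlib

section
/- For every square integrable f : [0,1]^n → ℝ and every k ∈ {1,...,n}, ∫_{[0,1]^n} f(x) · x_{(k)} dx = ∫_{[0,1]^n} f(x) dx − ∑_{S ⊆ {1,...,n}, |S| ≥ k} (−1)^{|S|−k} binom(|S|−1, k−1) ∫_0^1 ( ∫_{B_{S,y}} f(x) dx ) dy, where B_{S,y} = {x ∈ [0,1]^n : x_i ≤ y for all i ∈ S}. -/
open MeasureTheory Finset

/-- The `k`-th order statistic of `x : Fin n → ℝ`, with conventions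
`oStat x 0 = 0` and `oStat x k = 1` for `k > n`. For `1 ≤ k ≤ n` it is the
`k`-th smallest coordinate of `x`. -/
noncomputable def oStat {n : ℕ} (x : Fin n → ℝ) (k : ℕ) : ℝ :=
  if k = 0 then 0
  else if k ≤ n then ((Finset.univ.val.map x).sort (· ≤ ·)).getD (k - 1) 0
  else 1

/-- The `k`-th order statistic of the subfamily `(x i)_{i ∈ S}`. -/
noncomputable def oStatS {n : ℕ} (S : Finset (Fin n)) (x : Fin n → ℝ) (k : ℕ) : ℝ :=
  ((S.val.map x).sort (· ≤ ·)).getD (k - 1) 0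

/-! For `x ∈ [0,1]^n` we have `x₍ₖ₎ = 1 - λ {y ∈ [0,1] | x₍ₖ₎ ≤ y}`, and `x₍ₖ₎ ≤ y` holds exactly
when at least `k` coordinates of `x` are `≤ y`. The identity
`∑_{S ⊆ A, k ≤ |S|} (-1)^(|S|-k) C(|S|-1, k-1) = [k ≤ |A|]`, proved by induction on `|A|` from
Pascal's rule and the orthogonality `∑_j (-1)^(j-r) C(m,j) C(j,r) = δ_{m,r}`, applied to
`A = {i | x i ≤ y}`, writes the indicator of `x₍ₖ₎ ≤ y` as a signed sum of the indicators of
`x ∈ B_{S,y}`. Multiplying by `f`, integrating over `x` and swapping the two integrals (Fubini)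
gives the formula. -/

theorem sum_range_neg_one_pow_mul_choose_mul_choose (m r : ℕ) :
    ∑ j ∈ range (m + 1), (-1 : ℤ) ^ (j + r) * (m.choose j * j.choose r) =
      if m = r then 1 else 0 := by
  rcases lt_or_ge m r with hmr | hrm
  · rw [if_neg hmr.ne]
    refine sum_eq_zero fun j hj => ?_
    rw [Nat.choose_eq_zero_of_lt (n := j) (by grind), Nat.cast_zero, mul_zero, mul_zero]
  obtain ⟨d, rfl⟩ := Nat.exists_eq_add_of_le hrm
  have hshift (v : ℕ) : (-1 : ℤ) ^ (r + v + r) * ((r + d).choose (r + v) * (r + v).choose r) =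
      (r + d).choose r * ((-1) ^ v * d.choose v) := by
    rw [← Nat.cast_mul, Nat.choose_mul (Nat.le_add_right r v), Nat.add_sub_cancel_left,
      Nat.add_sub_cancel_left, add_right_comm, pow_add _ (r + r), ← two_mul, pow_mul]
    push_cast
    ring
  rw [add_assoc, sum_range_add, sum_eq_zero fun j hj => by
      rw [Nat.choose_eq_zero_of_lt (n := j) (mem_range.1 hj), Nat.cast_zero, mul_zero, mul_zero],
    zero_add, sum_congr rfl fun v _ => hshift v, ← mul_sum, Int.alternating_sum_range_choose]
  rcases Nat.eq_zero_or_pos d with rfl | hd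
  · simp
  · rw [if_neg hd.ne', if_neg (by omega), mul_zero]

theorem sum_range_choose_succ_mul_neg_one_pow_mul_choose (a r : ℕ) :
    ∑ u ∈ range a, (a.choose (u + 1) : ℤ) * ((-1) ^ (u + r) * u.choose r) =
      if r < a then 1 else 0 := by
  induction a with
  | zero => simp
  | succ a ih =>
    simp_rw [Nat.choose_succ_succ' a, Nat.cast_add, add_mul, sum_add_distrib]
    rw [sum_range_succ (fun u => (a.choose (u + 1) : ℤ) * _) a, Nat.choose_succ_self,
      Nat.cast_zero, zero_mul, add_zero, ih]
    simp_rw [← mul_assoc, mul_comm _ ((-1 : ℤ) ^ _), mul_assoc]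
    rw [sum_range_neg_one_pow_mul_choose_mul_choose]
    grind

theorem Finset.sum_powerset_filter_neg_one_pow_mul_choose {α : Type*} (A : Finset α) {k : ℕ}
    (hk : 1 ≤ k) :
    ∑ S ∈ A.powerset with k ≤ #S, (-1 : ℤ) ^ (#S - k) * (#S - 1).choose (k - 1) =
      if k ≤ #A then 1 else 0 := by
  obtain ⟨r, rfl⟩ := Nat.exists_eq_add_of_le' hk
  have hterm (u : ℕ) : (if r + 1 ≤ u + 1 then (-1 : ℤ) ^ (u + 1 - (r + 1)) * u.choose r
      else 0) = (-1) ^ (u + r) * u.choose r := by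
    split_ifs with hru
    · obtain ⟨d, rfl⟩ := Nat.exists_eq_add_of_le (Nat.le_of_succ_le_succ hru)
      rw [show r + d + 1 - (r + 1) = d by omega, show r + d + r = d + 2 * r by omega, pow_add,
        pow_mul]
      simp
    · rw [Nat.choose_eq_zero_of_lt (by omega), Nat.cast_zero, mul_zero]
  rw [sum_filter, sum_powerset_apply_card (fun m => if r + 1 ≤ m then
      (-1 : ℤ) ^ (m - (r + 1)) * (m - 1).choose (r + 1 - 1) else 0), sum_range_succ']
  simp only [Nat.add_sub_cancel, nsmul_eq_mul, hterm, Nat.le_zero, Nat.add_one_ne_zero,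
    if_false, mul_zero, add_zero, sum_range_choose_succ_mul_neg_one_pow_mul_choose]
  exact if_congr Nat.lt_iff_add_one_le rfl rfl

theorem List.Pairwise.getElem_le_iff_lt_countP {α : Type*} [LinearOrder α] {l : List α}
    (hl : l.Pairwise (· ≤ ·)) {i : ℕ} (hi : i < l.length) (y : α) :
    l[i] ≤ y ↔ i < l.countP (· ≤ y) := by
  constructor
  · intro hy
    calc i < (l.take (i + 1)).length := by simp [hi]
      _ = (l.take (i + 1)).countP (· ≤ y) := by
        refine (countP_eq_length.2 fun a ha => ?_).symm
        obtain ⟨j, hj, rfl⟩ := mem_take_iff_getElem.1 ha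
        exact decide_eq_true
          ((hl.rel_get_of_le (a := ⟨j, by omega⟩) (b := ⟨i, hi⟩) (by simp; omega)).trans hy)
      _ ≤ l.countP (· ≤ y) := (take_sublist _ _).countP_le
  · intro hcount
    by_contra! hy
    have hdrop : (l.drop i).countP (· ≤ y) = 0 := by
      refine countP_eq_zero.2 fun a ha => ?_
      obtain ⟨j, hj, rfl⟩ := mem_drop_iff_getElem.1 ha
      simpa using hy.trans_le (hl.rel_get_of_le (a := ⟨i, hi⟩) (b := ⟨i + j, by omega⟩) (by simp))
    have : l.countP (· ≤ y) ≤ i := calc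
      l.countP (· ≤ y) = (l.take i).countP (· ≤ y) + (l.drop i).countP (· ≤ y) := by
        rw [← countP_append, take_append_drop]
      _ ≤ i := by rw [hdrop, add_zero]; exact countP_le_length.trans (length_take_le _ _)
    omega

theorem oStat_le_iff {n k : ℕ} (hk : 1 ≤ k) (hkn : k ≤ n) (x : Fin n → ℝ) (y : ℝ) :
    oStat x k ≤ y ↔ k ≤ #{i | x i ≤ y} := by
  have hsorted := Multiset.pairwise_sort (univ.val.map x) (· ≤ ·)
  have hlen : k - 1 < ((univ.val.map x).sort (· ≤ ·)).length := by simp; omega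
  rw [oStat, if_neg (by omega), if_pos hkn, List.getD_eq_getElem _ _ hlen,
    hsorted.getElem_le_iff_lt_countP hlen, ← Multiset.coe_countP, Multiset.sort_eq,
    Multiset.countP_map]
  change k - 1 < #{i | x i ≤ y} ↔ _
  omega

section Fubini

variable {X Y E : Type*} [MeasurableSpace X] [MeasurableSpace Y] [NormedAddCommGroup E]
  [NormedSpace ℝ E] [CompleteSpace E] {μ : Measure X} {ν : Measure Y} {s : Set (X × Y)}

theorem integral_indicator_comp_fst_prodMk (hs : MeasurableSet s) (f : X → E) (x : X) :
    ∫ y, s.indicator (f ·.1) (x, y) ∂ν = ν.real {y | (x, y) ∈ s} • f x :=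
  integral_indicator_const (f x) (hs.preimage measurable_prodMk_left)

variable [IsFiniteMeasure ν] {f : X → E}

theorem MeasureTheory.Integrable.measureReal_setOf_prodMk_mem_smul (hf : Integrable f μ)
    (hs : MeasurableSet s) :
    Integrable (fun x => ν.real {y | (x, y) ∈ s} • f x) μ := by
  simpa only [integral_indicator_comp_fst_prodMk hs] using
    ((hf.comp_fst ν).indicator hs).integral_prod_left

theorem integral_setIntegral_setOf_prodMk_mem [SFinite μ] (hf : Integrable f μ)
    (hs : MeasurableSet s) :
    ∫ y, ∫ x in {x | (x, y) ∈ s}, f x ∂μ ∂ν = ∫ x, ν.real {y | (x, y) ∈ s} • f x ∂μ := by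
  have hF := (hf.comp_fst ν).indicator hs
  calc ∫ y, ∫ x in {x | (x, y) ∈ s}, f x ∂μ ∂ν
      = ∫ y, ∫ x, s.indicator (f ·.1) (x, y) ∂μ ∂ν := by
        congr 1 with y
        exact (integral_indicator (hs.preimage measurable_prodMk_right)).symm
    _ = ∫ x, ∫ y, s.indicator (f ·.1) (x, y) ∂ν ∂μ :=
        (integral_integral_swap (f := fun x y => s.indicator (f ·.1) (x, y)) hF).symm
    _ = ∫ x, ν.real {y | (x, y) ∈ s} • f x ∂μ := by
        simp_rw [integral_indicator_comp_fst_prodMk hs]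

end Fubini

theorem measurableSet_setOf_forall_mem_apply_le {ι : Type*} (S : Finset ι) :
    MeasurableSet {p : (ι → ℝ) × ℝ | ∀ i ∈ S, p.1 i ≤ p.2} := by
  rw [show {p : (ι → ℝ) × ℝ | ∀ i ∈ S, p.1 i ≤ p.2} = ⋂ i ∈ S, {p | p.1 i ≤ p.2} by ext; simp]
  exact S.measurableSet_biInter fun i _ =>
    measurableSet_le ((measurable_pi_apply i).comp measurable_fst) measurable_snd

theorem measureReal_restrict_Icc_zero_one_Ici {c : ℝ} (h0 : 0 ≤ c) (h1 : c ≤ 1) :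
    (volume.restrict (Set.Icc (0 : ℝ) 1)).real (Set.Ici c) = 1 - c := by
  rw [measureReal_restrict_apply measurableSet_Ici,
    show Set.Ici c ∩ Set.Icc 0 1 = Set.Icc c 1 from
      Set.ext fun y => ⟨fun h => ⟨h.1, h.2.2⟩, fun h => ⟨h.1, h0.trans h.1, h.2⟩⟩,
    Real.volume_real_Icc_of_le h1]

theorem indicator_Ici_oStat {n k : ℕ} (hk : 1 ≤ k) (hkn : k ≤ n) (x : Fin n → ℝ) (y : ℝ) :
    (Set.Ici (oStat x k)).indicator 1 y =
      ∑ S ∈ Finset.univ.powerset.filter (fun S : Finset (Fin n) => k ≤ S.card),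
        (-1 : ℝ) ^ (S.card - k) * (Nat.choose (S.card - 1) (k - 1) : ℝ) *
          {y | ∀ i ∈ S, x i ≤ y}.indicator 1 y := by
  set A : Finset (Fin n) := {i | x i ≤ y}
  have hsub (S : Finset (Fin n)) : (∀ i ∈ S, x i ≤ y) ↔ S ⊆ A := by simp [A, subset_iff]
  have hfilter : {S ∈ {S ∈ (univ : Finset (Fin n)).powerset | k ≤ #S} | S ⊆ A} =
      {S ∈ A.powerset | k ≤ #S} := by
    ext S
    simp [and_comm]
  simp only [Set.indicator_apply, Set.mem_Ici, Set.mem_ofPred_eq, hsub, Pi.one_apply, mul_ite,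
    mul_one, mul_zero]
  simp_rw [oStat_le_iff hk hkn]
  rw [← sum_filter, hfilter]
  exact_mod_cast (A.sum_powerset_filter_neg_one_pow_mul_choose hk).symm

theorem oStat_eq_one_sub_sum {n k : ℕ} (hk : 1 ≤ k) (hkn : k ≤ n) {x : Fin n → ℝ}
    (hx : x ∈ Set.Icc (0 : Fin n → ℝ) 1) :
    oStat x k = 1 - ∑ S ∈ Finset.univ.powerset.filter (fun S : Finset (Fin n) => k ≤ S.card),
      (-1 : ℝ) ^ (S.card - k) * (Nat.choose (S.card - 1) (k - 1) : ℝ) *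
        (volume.restrict (Set.Icc (0 : ℝ) 1)).real {y | ∀ i ∈ S, x i ≤ y} := by
  have h0 : 0 ≤ oStat x k := by
    by_contra! hneg
    have hempty : #{i | x i ≤ oStat x k} = 0 :=
      card_eq_zero.2 (filter_false_of_mem fun i _ => not_le.2 (hneg.trans_le (hx.1 i)))
    have := (oStat_le_iff hk hkn x _).1 le_rfl
    omega
  have h1 : oStat x k ≤ 1 := by
    rwa [oStat_le_iff hk hkn, filter_true_of_mem fun i _ => show x i ≤ 1 from hx.2 i, card_univ,
      Fintype.card_fin]
  have hslice (S : Finset (Fin n)) : MeasurableSet {y | ∀ i ∈ S, x i ≤ y} :=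
    (measurableSet_setOf_forall_mem_apply_le S).preimage measurable_prodMk_left
  calc oStat x k = 1 - (volume.restrict (Set.Icc (0 : ℝ) 1)).real (Set.Ici (oStat x k)) := by
        rw [measureReal_restrict_Icc_zero_one_Ici h0 h1, sub_sub_cancel]
    _ = _ := by
        rw [← integral_indicator_one measurableSet_Ici]
        simp_rw [indicator_Ici_oStat hk hkn x]
        rw [integral_finsetSum _ fun S _ =>
          ((integrable_const 1).indicator (hslice S)).const_mul _]
        simp_rw [integral_const_mul, integral_indicator_one (hslice _)]

theorem stmt7 (n k : ℕ) (hk : 1 ≤ k) (hkn : k ≤ n) (f : (Fin n → ℝ) → ℝ)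
    (hf : MemLp f 2 (volume.restrict (Set.Icc (0 : Fin n → ℝ) 1))) :
    (∫ x in Set.Icc (0 : Fin n → ℝ) 1, f x * oStat x k) =
      (∫ x in Set.Icc (0 : Fin n → ℝ) 1, f x) -
      ∑ S ∈ Finset.univ.powerset.filter (fun S : Finset (Fin n) => k ≤ S.card),
        (-1 : ℝ) ^ (S.card - k) * (Nat.choose (S.card - 1) (k - 1) : ℝ) *
          ∫ y in Set.Icc (0 : ℝ) 1,
            ∫ x in {x : Fin n → ℝ | x ∈ Set.Icc (0 : Fin n → ℝ) 1 ∧ ∀ i ∈ S, x i ≤ y}, f x := by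
  have : IsFiniteMeasure (volume.restrict (Set.Icc (0 : Fin n → ℝ) 1)) :=
    isFiniteMeasure_restrict.2 measure_Icc_lt_top.ne
  have hfi := hf.integrable one_le_two
  set E : Finset (Fin n) → Set ((Fin n → ℝ) × ℝ) := fun S => {p | ∀ i ∈ S, p.1 i ≤ p.2}
  have hE (S : Finset (Fin n)) : MeasurableSet (E S) := measurableSet_setOf_forall_mem_apply_le S
  have hslice (S : Finset (Fin n)) (y : ℝ) : MeasurableSet {x | (x, y) ∈ E S} :=
    (hE S).preimage measurable_prodMk_right
  calc (∫ x in Set.Icc (0 : Fin n → ℝ) 1, f x * oStat x k)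
      = ∫ x in Set.Icc (0 : Fin n → ℝ) 1, f x - ∑ S ∈ univ.powerset.filter (k ≤ #·),
          (-1 : ℝ) ^ (S.card - k) * (Nat.choose (S.card - 1) (k - 1) : ℝ) *
            (volume.restrict (Set.Icc (0 : ℝ) 1)).real {y | (x, y) ∈ E S} • f x := by
        refine setIntegral_congr_fun measurableSet_Icc fun x hx => ?_
        simp only [oStat_eq_one_sub_sum hk hkn hx, mul_sub, mul_one, mul_sum, smul_eq_mul, E,
          Set.mem_ofPred_eq]
        congr! 2
        ring
    _ = _ := by
        rw [integral_sub hfi (integrable_finsetSum _ fun S _ =>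
          (hfi.measureReal_setOf_prodMk_mem_smul (hE S)).const_mul _),
          integral_finsetSum _ fun S _ =>
            (hfi.measureReal_setOf_prodMk_mem_smul (hE S)).const_mul _]
        simp_rw [integral_const_mul, ← integral_setIntegral_setOf_prodMk_mem hfi (hE _),
          Measure.restrict_restrict (hslice _ _), Set.inter_comm]
        rfl
end

section
/- For every k ∈ {1,...,n} and every f ∈ L²([0,1]^n), −(n+1)(n+2) ∫_{[0,1]^n} f(x)·(x_{(k+1)} − 2x_{(k)} + x_{(k−1)}) dx = (n+1)(n+2) ∫_{[0,1]^n} ∫_{x_{(k)}}^{x_{(k+1)}} ( f(x + (y − x_{(k)})·e_{π(k)}) − f(x) ) dy dx, where for x in the open simplex with x_{π(1)} < ... < x_{π(n)}, e_{π(k)} is the standard basis vector in the direction of the coordinate achieving the k-th order statistic. -/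
open MeasureTheory Finset

/-- The influence index `I(f,k)` of the `k`-th largest variable on `f`. -/
noncomputable def infl {n : ℕ} (f : (Fin n → ℝ) → ℝ) (k : ℕ) : ℝ :=
  -((n:ℝ)+1)*((n:ℝ)+2) * ∫ x in Set.Icc (0:Fin n → ℝ) 1,
    f x * (oStat x (k+1) - 2*oStat x k + oStat x (k-1))

/-- `shiftK k x y` replaces the coordinate of `x` achieving the `k`-th order
statistic by `y` (on points with pairwise distinct coordinates there is exactly
one such coordinate: the unique `i` such that exactly `k` coordinates are `≤ x i`). -/
noncomputable def shiftK {n : ℕ} (k : ℕ) (x : Fin n → ℝ) (y : ℝ) : Fin n → ℝ :=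
  fun i => if (Finset.univ.filter fun j => x j ≤ x i).card = k then y else x i

/-
Up to a null set, the cube splits into the open simplices `x (σ 0) < ⋯ < x (σ (n-1))`. On the
simplex of `σ` the `k`-th order statistic is the coordinate `i = σ (k-1)`, and the
measure-preserving involution `(x, y) ↦ (x with x i replaced by y, x i)` of `ℝⁿ × ℝ` maps the
region `x₍ₖ₎ < y < x₍ₖ₊₁₎` of that simplex onto its region `x₍ₖ₋₁₎ < y < x₍ₖ₎`, turning
`f (shiftK k x y)` into `f x`. Summing over `σ` and integrating in `y` gives
`∫∫_{x₍ₖ₎}^{x₍ₖ₊₁₎} f (shiftK k x y) dy dx = ∫ f x (x₍ₖ₎ - x₍ₖ₋₁₎) dx`; subtracting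
`∫ f x (x₍ₖ₊₁₎ - x₍ₖ₎) dx` leaves the second difference in `infl`.
-/

open Function

variable {n : ℕ}

lemma oStat_zero (x : Fin n → ℝ) : oStat x 0 = 0 := rfl

lemma oStat_of_lt (x : Fin n → ℝ) {m : ℕ} (hm : n < m) : oStat x m = 1 := by
  rw [oStat, if_neg (by omega), if_neg (by omega)]

lemma oStat_comp_perm (x : Fin n → ℝ) (σ : Equiv.Perm (Fin n)) (m : ℕ) :
    oStat (x ∘ σ) m = oStat x m := by
  simp only [oStat, ← Multiset.map_map, Multiset.map_univ_val_equiv]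

lemma oStat_succ_of_monotone {g : Fin n → ℝ} (hg : Monotone g) (j : Fin n) :
    oStat g (j + 1) = g j := by
  have hsort : (Finset.univ.val.map g).sort (· ≤ ·) = List.ofFn g := by
    rw [Fin.univ_val_map, Multiset.coe_sort]
    exact List.mergeSort_eq_self _ (List.sortedLE_ofFn_iff.mpr hg).pairwise
  rw [oStat, if_neg (by omega), if_pos (by omega), hsort, List.getD_eq_getElem _ _ (by simp)]
  simp

lemma oStat_succ_of_monotone_comp {x : Fin n → ℝ} {σ : Equiv.Perm (Fin n)}
    (h : Monotone (x ∘ σ)) (j : Fin n) : oStat x (j + 1) = x (σ j) := by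
  rw [← oStat_comp_perm x σ, oStat_succ_of_monotone h]; rfl

lemma oStat_succ_eq_sort (x : Fin n → ℝ) (j : Fin n) : oStat x (j + 1) = x (Tuple.sort x j) :=
  oStat_succ_of_monotone_comp (Tuple.monotone_sort x) j

lemma oStat_mem_Icc {x : Fin n → ℝ} (hx : ∀ i, x i ∈ Set.Icc (0 : ℝ) 1) (m : ℕ) :
    oStat x m ∈ Set.Icc (0 : ℝ) 1 := by
  rcases Nat.lt_or_ge n m with hm | hm
  · rw [oStat_of_lt x hm]; simp
  cases m with
  | zero => simp [oStat_zero]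
  | succ j => exact oStat_succ_eq_sort x ⟨j, hm⟩ ▸ hx _

lemma oStat_succ_le_iff (x : Fin n → ℝ) (j : Fin n) (c : ℝ) :
    oStat x (j + 1) ≤ c ↔ j < #{i | x i ≤ c} := by
  rw [oStat_succ_eq_sort, ← Function.comp_apply (f := x),
    ← Tuple.lt_card_le_iff_apply_le_of_monotone (Tuple.monotone_sort x),
    Finset.card_equiv (Tuple.sort x) (t := {i | x i ≤ c}) (by simp)]

lemma measurable_oStat (m : ℕ) : Measurable fun x : Fin n → ℝ => oStat x m := by
  rcases Nat.lt_or_ge n m with hm | hm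
  · simp only [oStat_of_lt _ hm]; exact measurable_const
  cases m with
  | zero => exact measurable_const
  | succ j =>
    refine measurable_of_Iic fun c => ?_
    have hcount : Measurable fun x : Fin n → ℝ => #{i | x i ≤ c} := by
      simp only [Finset.card_filter]
      exact Finset.measurable_sum _ fun i _ =>
        Measurable.ite (measurableSet_le (measurable_pi_apply i) measurable_const)
          measurable_const measurable_const
    have hpre : (fun x => oStat x (j + 1)) ⁻¹' Set.Iic c =
        (fun x => #{i | x i ≤ c}) ⁻¹' Set.Ioi j :=
      Set.ext fun x => oStat_succ_le_iff x ⟨j, hm⟩ c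
    exact hpre ▸ hcount measurableSet_Ioi

lemma card_le_apply_of_strictMono_comp {x : Fin n → ℝ} {σ : Equiv.Perm (Fin n)}
    (h : StrictMono (x ∘ σ)) (j : Fin n) : #{i | x i ≤ x (σ j)} = j + 1 := by
  rw [Finset.card_equiv σ.symm (t := {a | a ≤ j}) (by simp [← h.le_iff_le]), ← Fin.card_Iic]
  congr 1; ext; simp

lemma shiftK_succ_eq_update {x : Fin n → ℝ} {σ : Equiv.Perm (Fin n)}
    (h : StrictMono (x ∘ σ)) (j : Fin n) (y : ℝ) : shiftK (j + 1) x y = update x (σ j) y := by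
  funext i
  obtain ⟨a, rfl⟩ := σ.surjective i
  simp only [shiftK, card_le_apply_of_strictMono_comp h, update, σ.injective.eq_iff]
  grind

section Simplex

def openCube (n : ℕ) : Set (Fin n → ℝ) := Set.univ.pi fun _ => Set.Ioo 0 1

def openSimplex (σ : Equiv.Perm (Fin n)) : Set (Fin n → ℝ) := {x | StrictMono (x ∘ σ)}

lemma StrictMono.update_of_lt {ι α : Type*} [LinearOrder ι] [DecidableEq ι] [Preorder α]
    {g : ι → α} (hg : StrictMono g) {j : ι} {y : α} (hlo : ∀ a < j, g a < y)
    (hhi : ∀ b, j < b → y < g b) : StrictMono (update g j y) := by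
  intro a b hab
  by_cases ha : a = j <;> by_cases hb : b = j
  · subst ha hb; exact absurd hab (lt_irrefl _)
  · subst ha; simpa [hb] using hhi b hab
  · subst hb; simpa [ha] using hlo a hab
  · simpa [ha, hb] using hg hab

variable {x : Fin n → ℝ} {σ : Equiv.Perm (Fin n)}

lemma oStat_nonneg (hx : x ∈ openCube n) (m : ℕ) : 0 ≤ oStat x m :=
  (oStat_mem_Icc (fun i => Set.Ioo_subset_Icc_self (hx i trivial)) m).1

lemma oStat_le_one (hx : x ∈ openCube n) (m : ℕ) : oStat x m ≤ 1 :=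
  (oStat_mem_Icc (fun i => Set.Ioo_subset_Icc_self (hx i trivial)) m).2

lemma oStat_lt_oStat_succ (hx : x ∈ openCube n) (h : x ∈ openSimplex σ) {m : ℕ} (hm : m ≤ n) :
    oStat x m < oStat x (m + 1) := by
  have hx' : ∀ i, 0 < x i ∧ x i < 1 := fun i => hx i trivial
  have hsucc (j : Fin n) := oStat_succ_of_monotone_comp h.monotone j
  rcases hm.lt_or_eq with hm | rfl
  · rw [hsucc ⟨m, hm⟩]
    cases m with
    | zero => exact (hx' _).1
    | succ m => exact (hsucc ⟨m, by omega⟩).symm ▸ h (Fin.mk_lt_mk.mpr (Nat.lt_succ_self m))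
  · rw [oStat_of_lt x (Nat.lt_succ_self m)]
    cases m with
    | zero => exact zero_lt_one
    | succ m => exact (hsucc ⟨m, by omega⟩).symm ▸ (hx' _).2

lemma oStat_le_oStat_succ (hx : x ∈ openCube n) (h : x ∈ openSimplex σ) (m : ℕ) :
    oStat x m ≤ oStat x (m + 1) := by
  rcases le_or_gt m n with hm | hm
  · exact (oStat_lt_oStat_succ hx h hm).le
  · rw [oStat_of_lt x hm, oStat_of_lt x (by omega)]

lemma update_mem_openSimplex (h : x ∈ openSimplex σ) (j : Fin n) {y : ℝ}
    (hlo : oStat x j < y) (hhi : y < oStat x (j + 2)) :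
    update x (σ j) y ∈ openSimplex σ := by
  have hsucc (j : Fin n) := oStat_succ_of_monotone_comp h.monotone j
  change StrictMono (update x (σ j) y ∘ σ)
  rw [update_comp_equiv, Equiv.symm_apply_apply]
  refine h.update_of_lt (fun a ha => ?_) (fun b hb => ?_)
  · have hj : oStat x j = x (σ ⟨j - 1, by omega⟩) := by
      rw [← hsucc]; congr 1; simp only; omega
    exact lt_of_le_of_lt (h.monotone (Fin.mk_le_mk.mpr (by omega))) (hj ▸ hlo)
  · have hj : oStat x (j + 2) = x (σ ⟨j + 1, by omega⟩) := hsucc ⟨j + 1, by omega⟩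
    exact lt_of_lt_of_le (hj ▸ hhi) (h.monotone (Fin.mk_le_mk.mpr (by omega)))

lemma oStat_update_of_ne (h : x ∈ openSimplex σ) {j : Fin n} {y : ℝ}
    (h' : update x (σ j) y ∈ openSimplex σ) {m : ℕ} (hm : m ≠ j + 1) :
    oStat (update x (σ j) y) m = oStat x m := by
  rcases Nat.lt_or_ge n m with hn | hn
  · rw [oStat_of_lt _ hn, oStat_of_lt _ hn]
  cases m with
  | zero => rfl
  | succ m =>
    rw [oStat_succ_of_monotone_comp h'.monotone ⟨m, hn⟩,
      oStat_succ_of_monotone_comp h.monotone ⟨m, hn⟩,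
      update_of_ne (σ.injective.ne (Fin.ne_of_val_ne (by simp only; omega)))]

end Simplex

section SwapCoord

variable {ι α : Type*} [DecidableEq ι] [MeasurableSpace α]

-- A permutation of the coordinates of `Option ι → α`, hence measure preserving.
def swapCoord (i : ι) : ((ι → α) × α) ≃ᵐ ((ι → α) × α) :=
  (MeasurableEquiv.piOptionEquivProd fun _ => α).symm.trans
    ((MeasurableEquiv.piCongrLeft (fun _ => α) (Equiv.swap none (some i))).trans
      (MeasurableEquiv.piOptionEquivProd fun _ => α))

lemma swapCoord_apply (i : ι) (p : (ι → α) × α) :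
    swapCoord i p = (update p.1 i p.2, p.1 i) := by
  set τ := Equiv.swap none (some i)
  set g := (MeasurableEquiv.piOptionEquivProd fun _ => α).symm p
  have hg (o : Option ι) : g o = o.elim p.2 p.1 := by cases o <;> rfl
  have hτ (o : Option ι) : MeasurableEquiv.piCongrLeft (fun _ => α) τ g o = g (τ o) := by
    rw [MeasurableEquiv.coe_piCongrLeft, Equiv.piCongrLeft_apply, eq_rec_constant, Equiv.symm_swap]
  change (fun j => MeasurableEquiv.piCongrLeft (fun _ => α) τ g (some j),
    MeasurableEquiv.piCongrLeft (fun _ => α) τ g none) = _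
  ext j
  · by_cases hj : j = i
    · subst hj; simp [hτ, hg, τ]
    · simp [hτ, hg, τ, hj, Equiv.swap_apply_of_ne_of_ne]
  · simp [hτ, hg, τ]

lemma measurePreserving_swapCoord [Fintype ι] (μ : Measure α) [SigmaFinite μ] (i : ι) :
    MeasurePreserving (swapCoord i) ((Measure.pi fun _ => μ).prod μ)
      ((Measure.pi fun _ => μ).prod μ) := by
  have he : MeasurePreserving (MeasurableEquiv.piOptionEquivProd fun _ : Option ι => α).symm
      ((Measure.pi fun _ => μ).prod μ) (Measure.pi fun _ => μ) :=
    ⟨MeasurableEquiv.measurable _, Measure.pi_map_piOptionEquivProd fun _ => μ⟩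
  exact he.symm.comp ((measurePreserving_piCongrLeft _ _).comp he)

end SwapCoord

section Gap

def gap (n m : ℕ) : Set ((Fin n → ℝ) × ℝ) :=
  {p | p.1 ∈ openCube n ∧ oStat p.1 m < p.2 ∧ p.2 < oStat p.1 (m + 1)}

variable {x : Fin n → ℝ} {σ : Equiv.Perm (Fin n)} {j : Fin n}

lemma swapCoord_mem_gap_succ {p : (Fin n → ℝ) × ℝ}
    (hp : p ∈ gap n j ∩ Prod.fst ⁻¹' openSimplex σ) :
    swapCoord (σ j) p ∈ gap n (j + 1) ∩ Prod.fst ⁻¹' openSimplex σ := by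
  obtain ⟨x, y⟩ := p
  obtain ⟨⟨hx, hlo, hhi⟩, hσ⟩ := hp
  have hxi : oStat x (j + 1) = x (σ j) := oStat_succ_of_monotone_comp hσ.monotone j
  have hnext := oStat_lt_oStat_succ hx hσ (m := j + 1) j.isLt
  have hσ' := update_mem_openSimplex hσ j hlo (hhi.trans hnext)
  rw [swapCoord_apply]; dsimp only
  refine ⟨⟨(Set.update_mem_pi_iff_of_mem hx).2 fun _ => ⟨(oStat_nonneg hx j).trans_lt hlo,
    hhi.trans_le (oStat_le_one hx _)⟩, ?_, ?_⟩, hσ'⟩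
  · rwa [oStat_succ_of_monotone_comp hσ'.monotone j, update_self, ← hxi]
  · rw [oStat_update_of_ne hσ hσ' (by omega), ← hxi]; exact hnext

lemma swapCoord_mem_gap {p : (Fin n → ℝ) × ℝ}
    (hp : p ∈ gap n (j + 1) ∩ Prod.fst ⁻¹' openSimplex σ) :
    swapCoord (σ j) p ∈ gap n j ∩ Prod.fst ⁻¹' openSimplex σ := by
  obtain ⟨x, y⟩ := p
  obtain ⟨⟨hx, hlo, hhi⟩, hσ⟩ := hp
  have hxi : oStat x (j + 1) = x (σ j) := oStat_succ_of_monotone_comp hσ.monotone j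
  have hprev := oStat_lt_oStat_succ hx hσ (m := j) j.isLt.le
  have hσ' := update_mem_openSimplex hσ j (hprev.trans hlo) hhi
  rw [swapCoord_apply]; dsimp only
  refine ⟨⟨(Set.update_mem_pi_iff_of_mem hx).2 fun _ => ⟨(oStat_nonneg hx _).trans_lt hlo,
    hhi.trans_le (oStat_le_one hx _)⟩, ?_, ?_⟩, hσ'⟩
  · rw [oStat_update_of_ne hσ hσ' (by omega), ← hxi]; exact hprev
  · rwa [oStat_succ_of_monotone_comp hσ'.monotone j, update_self, ← hxi]

lemma swapCoord_preimage_gap (σ : Equiv.Perm (Fin n)) (j : Fin n) :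
    swapCoord (σ j) ⁻¹' (gap n j ∩ Prod.fst ⁻¹' openSimplex σ) =
      gap n (j + 1) ∩ Prod.fst ⁻¹' openSimplex σ := by
  have hinv (p : (Fin n → ℝ) × ℝ) : swapCoord (σ j) (swapCoord (σ j) p) = p := by
    simp [swapCoord_apply]
  exact Set.ext fun p => ⟨fun h => hinv p ▸ swapCoord_mem_gap_succ h, swapCoord_mem_gap⟩

end Gap

lemma ae_injective (ι : Type*) [Fintype ι] : ∀ᵐ x : ι → ℝ, Injective x := by
  classical
  have hne (i j : ι) (hij : i ≠ j) : ∀ᵐ x : ι → ℝ, x i ≠ x j := by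
    let L : (ι → ℝ) →ₗ[ℝ] ℝ := LinearMap.proj (R := ℝ) (φ := fun _ => ℝ) i - LinearMap.proj j
    have hL : LinearMap.ker L ≠ ⊤ := fun h => by
      have := LinearMap.mem_ker.1 (h ▸ Submodule.mem_top : Pi.single i 1 ∈ LinearMap.ker L)
      simp [L, hij.symm] at this
    refine measure_mono_null (fun x hx => ?_) (Measure.addHaar_submodule volume _ hL)
    simpa [L, sub_eq_zero] using hx
  have : ∀ᵐ x : ι → ℝ, ∀ i j, i ≠ j → x i ≠ x j := by
    simp only [ae_all_iff]
    exact hne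
  exact this.mono fun x hx i j hxij => by_contra fun h => hx i j h hxij

lemma ae_mem_iUnion_openSimplex (n : ℕ) : ∀ᵐ x : Fin n → ℝ, x ∈ ⋃ σ, openSimplex σ :=
  (ae_injective (Fin n)).mono fun x hx => Set.mem_iUnion.2
    ⟨Tuple.sort x,
      (Tuple.monotone_sort x).strictMono_of_injective (hx.comp (Tuple.sort x).injective)⟩

lemma pairwise_disjoint_openSimplex : Pairwise (Disjoint on (openSimplex (n := n))) := by
  refine fun σ τ hστ => Set.disjoint_left.2 fun x hσ hτ => hστ ?_
  have hx : Injective x := by simpa using hσ.injective.comp σ.symm.injective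
  exact Equiv.ext fun i => hx (congrFun (Tuple.unique_monotone hσ.monotone hτ.monotone) i)

lemma measurableSet_openSimplex (σ : Equiv.Perm (Fin n)) : MeasurableSet (openSimplex σ) := by
  have : openSimplex σ = ⋂ (a) (b) (_ : a < b), {x : Fin n → ℝ | x (σ a) < x (σ b)} := by
    ext; simp [openSimplex, StrictMono]
  rw [this]
  exact .iInter fun a => .iInter fun b => .iInter fun _ =>
    measurableSet_lt (measurable_pi_apply _) (measurable_pi_apply _)

lemma measurableSet_gap (m : ℕ) : MeasurableSet (gap n m) :=
  (MeasurableSet.univ_pi fun _ => measurableSet_Ioo).preimage measurable_fst |>.inter <|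
    (measurableSet_lt ((measurable_oStat m).comp measurable_fst) measurable_snd).inter
      (measurableSet_lt measurable_snd ((measurable_oStat (m + 1)).comp measurable_fst))

lemma iUnion_inter_openSimplex_ae_eq (S : Set ((Fin n → ℝ) × ℝ)) :
    (⋃ σ, S ∩ Prod.fst ⁻¹' openSimplex σ : Set _) =ᵐ[volume] S := by
  have hfst : ∀ᵐ p : (Fin n → ℝ) × ℝ, p.1 ∈ ⋃ σ, openSimplex σ :=
    Measure.quasiMeasurePreserving_fst.ae (ae_mem_iUnion_openSimplex n)
  filter_upwards [hfst] with p hp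
  change (p ∈ ⋃ σ, S ∩ Prod.fst ⁻¹' openSimplex σ) = (p ∈ S)
  simp only [Set.mem_iUnion, Set.mem_inter_iff, Set.mem_preimage] at hp ⊢
  exact propext ⟨fun ⟨_, h, _⟩ => h, fun h => hp.imp fun _ hσ => ⟨h, hσ⟩⟩

lemma integrableOn_of_inter_openSimplex {S : Set ((Fin n → ℝ) × ℝ)} {h : (Fin n → ℝ) × ℝ → ℝ}
    (hh : ∀ σ, IntegrableOn h (S ∩ Prod.fst ⁻¹' openSimplex σ)) : IntegrableOn h S :=
  (integrableOn_finite_iUnion.2 hh).congr_set_ae (iUnion_inter_openSimplex_ae_eq S).symm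

lemma setIntegral_eq_sum_inter_openSimplex {S : Set ((Fin n → ℝ) × ℝ)} {h : (Fin n → ℝ) × ℝ → ℝ}
    (hS : MeasurableSet S)
    (hh : ∀ σ, IntegrableOn h (S ∩ Prod.fst ⁻¹' openSimplex σ)) :
    ∫ p in S, h p = ∑ σ, ∫ p in S ∩ Prod.fst ⁻¹' openSimplex σ, h p := by
  rw [← setIntegral_congr_set (iUnion_inter_openSimplex_ae_eq S), integral_iUnion_fintype
    (fun σ => hS.inter (measurableSet_openSimplex σ |>.preimage measurable_fst)) _ hh]
  exact fun σ τ hστ => ((pairwise_disjoint_openSimplex hστ).preimage Prod.fst).mono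
    Set.inter_subset_right Set.inter_subset_right

lemma setIntegral_gap {h : (Fin n → ℝ) × ℝ → ℝ} {m : ℕ} (hh : IntegrableOn h (gap n m)) :
    ∫ p in gap n m, h p = ∫ x in Set.Icc 0 1, ∫ y in oStat x m..oStat x (m + 1), h (x, y) := by
  have hcube : MeasurableSet (openCube n) := MeasurableSet.univ_pi fun _ => measurableSet_Ioo
  have hslice (x : Fin n → ℝ) : ∫ y, (gap n m).indicator h (x, y) = (openCube n).indicator
      (fun x => ∫ y in Set.Ioo (oStat x m) (oStat x (m + 1)), h (x, y)) x := by
    by_cases hx : x ∈ openCube n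
    · rw [Set.indicator_of_mem hx, ← integral_indicator measurableSet_Ioo]
      congr 1 with y
      simp [Set.indicator, gap, hx]
    · simp [Set.indicator, gap, hx]
  rw [← integral_indicator (measurableSet_gap m), Measure.volume_eq_prod,
    integral_prod _ ((integrable_indicator_iff (measurableSet_gap m)).2 hh)]
  simp only [hslice]
  have hae : openCube n =ᵐ[volume] Set.Icc (0 : Fin n → ℝ) 1 := Measure.univ_pi_Ioo_ae_eq_Icc
  rw [integral_indicator hcube, ← setIntegral_congr_set hae]
  refine setIntegral_congr_ae hcube ?_
  filter_upwards [ae_mem_iUnion_openSimplex n] with x hx hxc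
  obtain ⟨σ, hσ⟩ := Set.mem_iUnion.1 hx
  rw [intervalIntegral.integral_of_le (oStat_le_oStat_succ hxc hσ m),
    integral_Ioc_eq_integral_Ioo]

section GapIntegrals

variable {f : (Fin n → ℝ) → ℝ}

lemma gap_subset_Icc_prod (m : ℕ) : gap n m ⊆ Set.Icc 0 1 ×ˢ Set.Icc 0 1 :=
  fun _ ⟨hx, hlo, hhi⟩ => ⟨⟨fun i => (hx i trivial).1.le, fun i => (hx i trivial).2.le⟩,
    (oStat_nonneg hx m).trans hlo.le, hhi.le.trans (oStat_le_one hx _)⟩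

lemma integrableOn_gap_comp_fst (hf : IntegrableOn f (Set.Icc 0 1)) (m : ℕ) :
    IntegrableOn (fun p => f p.1) (gap n m) := by
  refine IntegrableOn.mono_set ?_ (gap_subset_Icc_prod m)
  rw [IntegrableOn, Measure.volume_eq_prod, ← Measure.prod_restrict]
  exact hf.comp_fst _

lemma setIntegral_gap_comp_fst (hf : IntegrableOn f (Set.Icc 0 1)) (m : ℕ) :
    ∫ p in gap n m, f p.1 = ∫ x in Set.Icc 0 1, f x * (oStat x (m + 1) - oStat x m) := by
  rw [setIntegral_gap (integrableOn_gap_comp_fst hf m)]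
  simp [mul_comm]

lemma integrableOn_mul_oStat_sub (hf : IntegrableOn f (Set.Icc 0 1)) (m : ℕ) :
    IntegrableOn (fun x => f x * (oStat x (m + 1) - oStat x m)) (Set.Icc 0 1) := by
  refine hf.mul_bdd (c := 1)
    ((measurable_oStat _).sub (measurable_oStat _)).aestronglyMeasurable ?_
  filter_upwards [ae_restrict_mem measurableSet_Icc] with x hx
  have hI (m : ℕ) := oStat_mem_Icc (fun i => ⟨hx.1 i, hx.2 i⟩) m
  rw [Real.norm_eq_abs, abs_le]
  constructor <;> linarith [(hI m).1, (hI m).2, (hI (m + 1)).1, (hI (m + 1)).2]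

lemma setIntegral_gap_succ_shiftK (hf : IntegrableOn f (Set.Icc 0 1)) (j : Fin n) :
    IntegrableOn (fun p => f (shiftK (j + 1) p.1 p.2)) (gap n (j + 1)) ∧
      ∫ p in gap n (j + 1), f (shiftK (j + 1) p.1 p.2) = ∫ p in gap n j, f p.1 := by
  have hmeas (m : ℕ) (σ : Equiv.Perm (Fin n)) :
      MeasurableSet (gap n m ∩ Prod.fst ⁻¹' openSimplex σ) :=
    (measurableSet_gap m).inter ((measurableSet_openSimplex σ).preimage measurable_fst)
  have hmp (σ : Equiv.Perm (Fin n)) : MeasurePreserving (swapCoord (σ j))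
      (volume : Measure ((Fin n → ℝ) × ℝ)) volume := measurePreserving_swapCoord volume _
  have hemb (σ : Equiv.Perm (Fin n)) : MeasurableEmbedding (swapCoord (α := ℝ) (σ j)) :=
    (swapCoord (σ j)).measurableEmbedding
  have hshift (σ : Equiv.Perm (Fin n)) : Set.EqOn (fun p => f (shiftK (j + 1) p.1 p.2))
      (fun p => f (swapCoord (σ j) p).1) (gap n (j + 1) ∩ Prod.fst ⁻¹' openSimplex σ) :=
    fun p hp => by simp [shiftK_succ_eq_update hp.2, swapCoord_apply]
  have hB (σ : Equiv.Perm (Fin n)) :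
      IntegrableOn (fun p => f p.1) (gap n j ∩ Prod.fst ⁻¹' openSimplex σ) :=
    (integrableOn_gap_comp_fst hf j).mono_set Set.inter_subset_left
  have hA (σ : Equiv.Perm (Fin n)) : IntegrableOn (fun p => f (shiftK (j + 1) p.1 p.2))
      (gap n (j + 1) ∩ Prod.fst ⁻¹' openSimplex σ) := by
    have := ((hmp σ).integrableOn_comp_preimage (hemb σ)).2 (hB σ)
    rw [swapCoord_preimage_gap] at this
    exact this.congr_fun (hshift σ).symm (hmeas _ σ)
  refine ⟨integrableOn_of_inter_openSimplex hA, ?_⟩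
  rw [setIntegral_eq_sum_inter_openSimplex (measurableSet_gap _) hA,
    setIntegral_eq_sum_inter_openSimplex (measurableSet_gap _) hB]
  refine Finset.sum_congr rfl fun σ _ => ?_
  rw [setIntegral_congr_fun (hmeas _ σ) (hshift σ), ← swapCoord_preimage_gap]
  exact (hmp σ).setIntegral_preimage_emb (hemb σ) (fun p => f p.1) _

end GapIntegrals

theorem stmt18 (n k : ℕ) (hk : 1 ≤ k) (hkn : k ≤ n) (f : (Fin n → ℝ) → ℝ)
    (hf : MemLp f 2 (volume.restrict (Set.Icc (0 : Fin n → ℝ) 1))) :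
    infl f k = ((n : ℝ) + 1) * ((n : ℝ) + 2) *
      ∫ x in Set.Icc (0 : Fin n → ℝ) 1,
        ∫ y in (oStat x k)..(oStat x (k + 1)), (f (shiftK k x y) - f x) := by
  obtain ⟨j, rfl⟩ : ∃ j : Fin n, k = j + 1 := ⟨⟨k - 1, by omega⟩, by simp only; omega⟩
  have : IsFiniteMeasure (volume.restrict (Set.Icc (0 : Fin n → ℝ) 1)) :=
    isFiniteMeasure_restrict.2 isCompact_Icc.measure_ne_top
  have hfi : IntegrableOn f (Set.Icc 0 1) := hf.integrable one_le_two
  obtain ⟨hint, hshift⟩ := setIntegral_gap_succ_shiftK hfi j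
  have hf₁ := integrableOn_gap_comp_fst hfi (j + 1)
  rw [← setIntegral_gap (h := fun p => f (shiftK (j + 1) p.1 p.2) - f p.1) (hint.sub hf₁),
    integral_sub hint hf₁, hshift,
    setIntegral_gap_comp_fst hfi, setIntegral_gap_comp_fst hfi,
    ← integral_sub (integrableOn_mul_oStat_sub hfi _) (integrableOn_mul_oStat_sub hfi _), infl,
    Nat.add_sub_cancel, neg_mul, neg_mul, ← mul_neg, ← integral_neg]
  congr 2 with x
  ring
end
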